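/- arXiv:1411.3791 — 2 statements merged into one kernel-verified Lean document; each statement's English description precedes it below -/
import Mathlib

section
/- The subcontract relation ⪯ is the maximal independent subcontract preorder over output persistent contracts: for every preorder ≤ over output persistent contracts that is an independent subcontract preorder, ≤ is included in ⪯, i.e. C' ≤ C implies C' ⪯ C. -/
/-!
Formalization of choreographies, orchestrations and behavioural contracts
following Bravetti–Zavattaro, "Choreographies and Behavioural Contracts on
the Way to Dynamic Updates".
-/

/-- Action names (a denumerable set). -/
abbrev AName := ℕ
/-- Roles. -/
abbrev Role := ℕ

/-! ### The choreography calculus -/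

/-- Choreographies, including the auxiliary terms `one` (successful completion)
and `zero` (halt). -/
inductive Chor : Type
  | comm : AName → Role → Role → Chor      -- a_{r→s}
  | choice : Chor → Chor → Chor
  | seq : Chor → Chor → Chor
  | par : Chor → Chor → Chor
  | star : Chor → Chor
  | one : Chor
  | zero : Chor
  deriving DecidableEq

/-- Labels of the choreography semantics: interactions `a_{r→s}` and `√`. -/
inductive CLabel : Type
  | comm : AName → Role → Role → CLabel
  | tick : CLabel
  deriving DecidableEq

/-- Operational semantics of choreographies. -/
inductive CStep : Chor → CLabel → Chor → Prop
  | comm : CStep (.comm a r s) (.comm a r s) .one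
  | one : CStep .one .tick .zero
  | starTick : CStep (.star H) .tick .zero
  | choiceL : CStep H η H' → CStep (.choice H L) η H'
  | choiceR : CStep L η L' → CStep (.choice H L) η L'
  | seqL : CStep H η H' → η ≠ .tick → CStep (.seq H L) η (.seq H' L)
  | seqTick : CStep H .tick H' → CStep L η L' → CStep (.seq H L) η L'
  | parL : CStep H η H' → η ≠ .tick → CStep (.par H L) η (.par H' L)
  | parR : CStep L η L' → η ≠ .tick → CStep (.par H L) η (.par H L')
  | parTick : CStep H .tick H' → CStep L .tick L' → CStep (.par H L) .tick (.par H' L')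
  | starStep : CStep H η H' → η ≠ .tick → CStep (.star H) η (.seq H' (.star H))

/-- Roles syntactically occurring in a choreography. -/
def rolesC : Chor → Finset Role
  | .comm _ r s => {r, s}
  | .choice H L | .seq H L | .par H L => rolesC H ∪ rolesC L
  | .star H => rolesC H
  | .one | .zero => ∅

/-- Action names syntactically occurring in a choreography. -/
def namesC : Chor → Finset AName
  | .comm a _ _ => {a}
  | .choice H L | .seq H L | .par H L => namesC H ∪ namesC L
  | .star H => namesC H
  | .one | .zero => ∅

/-! ### The orchestration calculus -/

/-- Orchestrations (also used as behavioural contract terms). -/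
inductive Orc : Type
  | zero : Orc
  | one : Orc
  | tau : Orc
  | inp : AName → Orc              -- receive a
  | out : AName → Role → Orc       -- invoke ā directed to role l
  | seq : Orc → Orc → Orc
  | choice : Orc → Orc → Orc
  | par : Orc → Orc → Orc
  | star : Orc → Orc
  deriving DecidableEq

/-- Labels of the orchestration/contract semantics. -/
inductive OLabel : Type
  | tau : OLabel
  | inp : AName → OLabel
  | out : AName → Role → OLabel
  | tick : OLabel
  deriving DecidableEq

/-- Operational semantics of orchestrations/contracts. -/
inductive OStep : Orc → OLabel → Orc → Prop
  | one : OStep .one .tick .zero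
  | tau : OStep .tau .tau .one
  | inp : OStep (.inp a) (.inp a) .one
  | out : OStep (.out a l) (.out a l) .one
  | choiceL : OStep C μ C' → OStep (.choice C D) μ C'
  | choiceR : OStep D μ D' → OStep (.choice C D) μ D'
  | seqL : OStep C μ C' → μ ≠ .tick → OStep (.seq C D) μ (.seq C' D)
  | seqTick : OStep C .tick C' → OStep D μ D' → OStep (.seq C D) μ D'
  | parL : OStep C μ C' → μ ≠ .tick → OStep (.par C D) μ (.par C' D)
  | parR : OStep D μ D' → μ ≠ .tick → OStep (.par C D) μ (.par C D')
  | parTick : OStep C .tick C' → OStep D .tick D' → OStep (.par C D) .tick (.par C' D')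
  | starTick : OStep (.star C) .tick .zero
  | starStep : OStep C μ C' → μ ≠ .tick → OStep (.star C) μ (.seq C' (.star C))

/-! ### Systems (compositions of located orchestrations/contracts) -/

/-- Systems: parallel compositions of located orchestrations `[C]_l`. -/
inductive Sys : Type
  | atom : Orc → Role → Sys
  | par : Sys → Sys → Sys
  deriving DecidableEq

/-- Labels of the system semantics. -/
inductive SLabel : Type
  | tau : SLabel
  | inp : AName → Role → SLabel            -- a_s
  | out : AName → Role → Role → SLabel     -- ā_{r s}
  | comm : AName → Role → Role → SLabel    -- a_{r→s}
  | tick : SLabel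
  deriving DecidableEq

/-- Operational semantics of systems. -/
inductive SStep : Sys → SLabel → Sys → Prop
  | atomTau : OStep C .tau C' → SStep (.atom C r) .tau (.atom C' r)
  | atomInp : OStep C (.inp a) C' → SStep (.atom C r) (.inp a r) (.atom C' r)
  | atomOut : OStep C (.out a s) C' → SStep (.atom C r) (.out a r s) (.atom C' r)
  | atomTick : OStep C .tick C' → SStep (.atom C r) .tick (.atom C' r)
  | parL : SStep P μ P' → μ ≠ .tick → SStep (.par P Q) μ (.par P' Q)
  | parR : SStep Q μ Q' → μ ≠ .tick → SStep (.par P Q) μ (.par P Q')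
  | commLR : SStep P (.out a r s) P' → SStep Q (.inp a s) Q' →
      SStep (.par P Q) (.comm a r s) (.par P' Q')
  | commRL : SStep P (.inp a s) P' → SStep Q (.out a r s) Q' →
      SStep (.par P Q) (.comm a r s) (.par P' Q')
  | parTick : SStep P .tick P' → SStep Q .tick Q' → SStep (.par P Q) .tick (.par P' Q')

/-- One step of a completely specified system: an internal `τ` step or a
completed interaction `a_{r→s}`. -/
def CompleteStep (P P' : Sys) : Prop :=
  SStep P .tau P' ∨ ∃ a r s, SStep P (.comm a r s) P'

/-- Reachability through complete (τ / completed-interaction) steps. -/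
inductive Reach : Sys → Sys → Prop
  | refl (P) : Reach P P
  | step : CompleteStep P P' → Reach P' P'' → Reach P P''

/-- `P` can perform the successful-termination label `√`. -/
def CanTick (P : Sys) : Prop := ∃ P', SStep P .tick P'

/-- Correct composition `P↓`: every reachable state can reach a state able to
perform `√`. -/
def Correct (P : Sys) : Prop :=
  ∀ P', Reach P P' → ∃ P'', Reach P' P'' ∧ CanTick P''

/-- `WTrace P w` is the weak transition `P ⇒^{w√}`: `P` performs the sequence
`w` of completed interactions `a_{r→s}` (absorbing `τ` steps) and then `√`. -/
inductive WTrace : Sys → List (AName × Role × Role) → Prop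
  | tick : CanTick P → WTrace P []
  | tau : SStep P .tau P' → WTrace P' w → WTrace P w
  | comm : SStep P (.comm a r s) P' → WTrace P' w → WTrace P ((a, r, s) :: w)

/-- `CTrace H w` is the transition sequence `H →^{w√}`. -/
inductive CTrace : Chor → List (AName × Role × Role) → Prop
  | tick : CStep H .tick H' → CTrace H []
  | comm : CStep H (.comm a r s) H' → CTrace H' w → CTrace H ((a, r, s) :: w)

/-- `P` implements `H` (written `P ∝ H`): `P` is a correct composition and all
its conversations (followed by `√`) are admitted by `H`. -/
def Implements (P : Sys) (H : Chor) : Prop :=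
  Correct P ∧ ∀ w, WTrace P w → CTrace H w

/-! ### Projection and well-formedness -/

/-- Projection of a choreography on a role (homomorphic over all operators). -/
def proj : Chor → Role → Orc
  | .comm a r s, t => if t = r then .out a s else if t = s then .inp a else .one
  | .choice H L, t => .choice (proj H t) (proj L t)
  | .seq H L, t => .seq (proj H t) (proj L t)
  | .par H L, t => .par (proj H t) (proj L t)
  | .star H, t => .star (proj H t)
  | .one, _ => .one
  | .zero, _ => .zero

/-- Parallel composition of a list of located contracts
`[C_1]_{l_1} || … || [C_n]_{l_n}`. -/
def composeC : List (Orc × Role) → Sys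
  | [] => .atom .one 0
  | [(C, l)] => .atom C l
  | (C, l) :: x :: xs => .par (.atom C l) (composeC (x :: xs))

/-- Well-formed choreography: the system obtained by projecting `H` on all its
roles implements `H` (for any enumeration of its roles). -/
def WellFormed (H : Chor) : Prop :=
  ∀ L : List Role, L.Nodup → L.toFinset = rolesC H →
    Implements (composeC (L.map fun r => (proj H r, r))) H

/-! ### Behavioural contracts: basic notions -/

/-- Roles targeted by output actions syntactically occurring in a contract. -/
def oroles : Orc → Finset Role
  | .out _ l => {l}
  | .seq C D | .choice C D | .par C D => oroles C ∪ oroles D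
  | .star C => oroles C
  | _ => ∅

/-- Input action names syntactically occurring in a contract: `I(C)`. -/
def inames : Orc → Finset AName
  | .inp a => {a}
  | .seq C D | .choice C D | .par C D => inames C ∪ inames D
  | .star C => inames C
  | _ => ∅

/-- `C \\ M`: replace every input on a name in `M` occurring in `C` by `0`. -/
def restrict (C : Orc) (M : Finset AName) : Orc :=
  match C with
  | .inp a => if a ∈ M then .zero else .inp a
  | .seq C D => .seq (restrict C M) (restrict D M)
  | .choice C D => .choice (restrict C M) (restrict D M)
  | .par C D => .par (restrict C M) (restrict D M)
  | .star C => .star (restrict C M)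
  | C => C

/-- Reachability in the contract LTS (through any labels). -/
inductive OReach : Orc → Orc → Prop
  | refl (C) : OReach C C
  | step : OStep C μ C' → OReach C' C'' → OReach C C''

/-- Output persistence: once a contract decides to execute an output, its
actual execution is mandatory to reach successful termination. -/
def OutputPersistent (C : Orc) : Prop :=
  ∀ C', OReach C C' → ∀ a l, (∃ D, OStep C' (.out a l) D) →
    (¬ ∃ D, OStep C' .tick D) ∧
    (∀ μ C'', OStep C' μ C'' → μ ≠ .out a l → ∃ D, OStep C'' (.out a l) D)

/-- The list of roles of the located contracts occurring in a system. -/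
def rolesList : Sys → List Role
  | .atom _ r => [r]
  | .par P Q => rolesList P ++ rolesList Q

/-- No contract sends outputs to its own role. -/
def NoSelfOut : Sys → Prop
  | .atom C r => r ∉ oroles C
  | .par P Q => NoSelfOut P ∧ NoSelfOut Q

/-- Well-formed system: pairwise distinct roles, no output to one's own role. -/
def WFSys (P : Sys) : Prop := (rolesList P).Nodup ∧ NoSelfOut P

/-- All contracts occurring in the system are output persistent. -/
def AllOP : Sys → Prop
  | .atom C _ => OutputPersistent C
  | .par P Q => AllOP P ∧ AllOP Q

/-- The subcontract relation `C' ⪯ C` (compliance testing): for every fresh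
role `l` and every test composition `P` of output persistent contracts not
using `l`, correctness of `[C]_l || P` implies correctness of `[C']_l || P`. -/
def Subcontract (C' C : Orc) : Prop :=
  ∀ l : Role, l ∉ oroles C ∪ oroles C' →
    ∀ P : Sys, AllOP P → WFSys P → l ∉ rolesList P →
      Correct (.par (.atom C l) P) → Correct (.par (.atom C' l) P)

/-- Independent subcontract pre-order over output persistent contracts:
a pre-order such that refining any number of contracts of a correct system
independently preserves correctness. -/
def IndepSubcontractPre (le : Orc → Orc → Prop) : Prop :=
  (∀ C, OutputPersistent C → le C C) ∧
  (∀ C₁ C₂ C₃, OutputPersistent C₁ → OutputPersistent C₂ → OutputPersistent C₃ →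
      le C₁ C₂ → le C₂ C₃ → le C₁ C₃) ∧
  (∀ L : List (Orc × Orc × Role), L ≠ [] →
    (∀ x ∈ L, OutputPersistent x.1 ∧ OutputPersistent x.2.1 ∧ le x.2.1 x.1) →
    (L.map fun x => x.2.2).Nodup →
    (∀ x ∈ L, x.2.2 ∉ oroles x.1 ∪ oroles x.2.1) →
    Correct (composeC (L.map fun x => (x.1, x.2.2))) →
    Correct (composeC (L.map fun x => (x.2.1, x.2.2))))

/-- An uncontrollable contract: no test composition can lead it to success. -/
def Uncontrollable (C : Orc) : Prop :=
  ¬ ∃ (l : Role) (P : Sys), l ∉ oroles C ∧ AllOP P ∧ WFSys P ∧ l ∉ rolesList P ∧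
      Correct (.par (.atom C l) P)

/-- Weak traces of a contract: sequences of visible labels, absorbing `τ`. -/
inductive WOTrace : Orc → List OLabel → Prop
  | nil (C) : WOTrace C []
  | tau : OStep C .tau C' → WOTrace C' w → WOTrace C w
  | vis : OStep C μ C' → μ ≠ .tau → WOTrace C' w → WOTrace C (μ :: w)

/-! ### Should-testing (fair testing) à la Rensink–Vogler -/

/-- Labels of tests: internal moves, synchronization with a (visible) action of
the tested contract (`√` included as any other action), and test success `√'`. -/
inductive TLab : Type
  | tau : TLab
  | sync : OLabel → TLab
  | succ : TLab

/-- A test: a labelled transition system over `TLab`. -/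
structure TestLTS where
  S : Type
  step : S → TLab → S → Prop
  init : S

/-- Steps of a contract/test configuration. -/
inductive TCStep (T : TestLTS) : (Orc × T.S) → (Orc × T.S) → Prop
  | ctau : OStep C .tau C' → TCStep T (C, t) (C', t)
  | ttau : T.step t .tau t' → TCStep T (C, t) (C, t')
  | sync : OStep C μ C' → μ ≠ OLabel.tau → T.step t (.sync μ) t' → TCStep T (C, t) (C', t')

/-- Reachability of configurations. -/
inductive TCReach (T : TestLTS) : (Orc × T.S) → (Orc × T.S) → Prop
  | refl (c) : TCReach T c c
  | step : TCStep T c c' → TCReach T c' c'' → TCReach T c c''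

/-- `C` should-passes `T`: from every reachable configuration a configuration
in which the test can perform the success action is reachable. -/
def Shd (C : Orc) (T : TestLTS) : Prop :=
  ∀ c, TCReach T (C, T.init) c → ∃ c', TCReach T c c' ∧ ∃ t', T.step c'.2 .succ t'

/-- The should-testing (fair testing) pre-order: `ShouldPre C' C` holds iff
every test that `C` should-passes is also should-passed by `C'`. -/
def ShouldPre (C' C : Orc) : Prop := ∀ T : TestLTS, Shd C T → Shd C' T

/-- The normal form `NF(C)`: the recursive-equations presentation of the LTS of
`C`.  Since contracts are here represented directly by LTS-denoting terms and
the should-testing pre-order only depends on the underlying LTS, the normal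
form is the term itself. -/
def NF (C : Orc) : Orc := C

/-!
Refining a single component of a system is the special case of independent refinement in which
every other component is refined by itself. The only work is to bring an arbitrary system
`[C]_l || P` into the right-nested shape `composeC` used in the definition of independent
subcontract preorders: structural congruence generated by associativity of `||` is a strong
bisimulation, so it preserves correctness.
-/

inductive SysEquiv : Sys → Sys → Prop
  | refl (P) : SysEquiv P P
  | symm : SysEquiv P Q → SysEquiv Q P
  | trans : SysEquiv P Q → SysEquiv Q R → SysEquiv P R
  | par : SysEquiv P P' → SysEquiv Q Q' → SysEquiv (.par P Q) (.par P' Q')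
  | assoc (P Q R) : SysEquiv (.par (.par P Q) R) (.par P (.par Q R))

def SysEquiv.Simulates (P Q : Sys) : Prop :=
  ∀ μ P', SStep P μ P' → ∃ Q', SStep Q μ Q' ∧ SysEquiv P' Q'

namespace SysEquiv

theorem simulates_assoc (P Q R : Sys) : Simulates (.par (.par P Q) R) (.par P (.par Q R)) := by
  intro μ X h
  cases h with
  | parL h hne =>
    cases h with
    | parL hP _ => exact ⟨_, .parL hP hne, .assoc ..⟩
    | parR hQ _ => exact ⟨_, .parR (.parL hQ hne) hne, .assoc ..⟩
    | commLR hP hQ => exact ⟨_, .commLR hP (.parL hQ nofun), .assoc ..⟩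
    | commRL hP hQ => exact ⟨_, .commRL hP (.parL hQ nofun), .assoc ..⟩
    | parTick => exact absurd rfl hne
  | parR hR hne => exact ⟨_, .parR (.parR hR hne) hne, .assoc ..⟩
  | commLR h hR =>
    cases h with
    | parL hP _ => exact ⟨_, .commLR hP (.parR hR nofun), .assoc ..⟩
    | parR hQ _ => exact ⟨_, .parR (.commLR hQ hR) nofun, .assoc ..⟩
  | commRL h hR =>
    cases h with
    | parL hP _ => exact ⟨_, .commRL hP (.parR hR nofun), .assoc ..⟩
    | parR hQ _ => exact ⟨_, .parR (.commRL hQ hR) nofun, .assoc ..⟩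
  | parTick h hR =>
    cases h with
    | parTick hP hQ => exact ⟨_, .parTick hP (.parTick hQ hR), .assoc ..⟩
    | parL _ hne | parR _ hne => exact absurd rfl hne

theorem simulates_assoc_symm (P Q R : Sys) :
    Simulates (.par P (.par Q R)) (.par (.par P Q) R) := by
  intro μ X h
  cases h with
  | parL hP hne => exact ⟨_, .parL (.parL hP hne) hne, .symm (.assoc ..)⟩
  | parR h hne =>
    cases h with
    | parL hQ _ => exact ⟨_, .parL (.parR hQ hne) hne, .symm (.assoc ..)⟩
    | parR hR _ => exact ⟨_, .parR hR hne, .symm (.assoc ..)⟩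
    | commLR hQ hR => exact ⟨_, .commLR (.parR hQ nofun) hR, .symm (.assoc ..)⟩
    | commRL hQ hR => exact ⟨_, .commRL (.parR hQ nofun) hR, .symm (.assoc ..)⟩
    | parTick => exact absurd rfl hne
  | commLR hP h =>
    cases h with
    | parL hQ _ => exact ⟨_, .parL (.commLR hP hQ) nofun, .symm (.assoc ..)⟩
    | parR hR _ => exact ⟨_, .commLR (.parL hP nofun) hR, .symm (.assoc ..)⟩
  | commRL hP h =>
    cases h with
    | parL hQ _ => exact ⟨_, .parL (.commRL hP hQ) nofun, .symm (.assoc ..)⟩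
    | parR hR _ => exact ⟨_, .commRL (.parL hP nofun) hR, .symm (.assoc ..)⟩
  | parTick hP h =>
    cases h with
    | parTick hQ hR => exact ⟨_, .parTick (.parTick hP hQ) hR, .symm (.assoc ..)⟩
    | parL _ hne | parR _ hne => exact absurd rfl hne

theorem Simulates.par {P P' Q Q' : Sys} (eP : SysEquiv P P') (eQ : SysEquiv Q Q')
    (hP : Simulates P P') (hQ : Simulates Q Q') : Simulates (.par P Q) (.par P' Q') := by
  intro μ X h
  cases h with
  | parL h hne =>
    obtain ⟨P₁, h', e⟩ := hP _ _ h
    exact ⟨_, .parL h' hne, e.par eQ⟩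
  | parR h hne =>
    obtain ⟨Q₁, h', e⟩ := hQ _ _ h
    exact ⟨_, .parR h' hne, eP.par e⟩
  | commLR h₁ h₂ =>
    obtain ⟨P₁, h₁', e₁⟩ := hP _ _ h₁
    obtain ⟨Q₁, h₂', e₂⟩ := hQ _ _ h₂
    exact ⟨_, .commLR h₁' h₂', e₁.par e₂⟩
  | commRL h₁ h₂ =>
    obtain ⟨P₁, h₁', e₁⟩ := hP _ _ h₁
    obtain ⟨Q₁, h₂', e₂⟩ := hQ _ _ h₂
    exact ⟨_, .commRL h₁' h₂', e₁.par e₂⟩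
  | parTick h₁ h₂ =>
    obtain ⟨P₁, h₁', e₁⟩ := hP _ _ h₁
    obtain ⟨Q₁, h₂', e₂⟩ := hQ _ _ h₂
    exact ⟨_, .parTick h₁' h₂', e₁.par e₂⟩

theorem Simulates.trans {P Q R : Sys} (hPQ : Simulates P Q) (hQR : Simulates Q R) :
    Simulates P R := by
  intro μ P' h
  obtain ⟨Q', hQ, e₁⟩ := hPQ _ _ h
  obtain ⟨R', hR, e₂⟩ := hQR _ _ hQ
  exact ⟨R', hR, e₁.trans e₂⟩

theorem simulates_and_symm {P Q : Sys} (h : SysEquiv P Q) : Simulates P Q ∧ Simulates Q P := by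
  induction h with
  | refl P => exact ⟨fun _ P' h => ⟨P', h, .refl _⟩, fun _ P' h => ⟨P', h, .refl _⟩⟩
  | symm _ ih => exact ih.symm
  | trans _ _ ih₁ ih₂ => exact ⟨ih₁.1.trans ih₂.1, ih₂.2.trans ih₁.2⟩
  | par e₁ e₂ ih₁ ih₂ =>
    exact ⟨.par e₁ e₂ ih₁.1 ih₂.1, .par e₁.symm e₂.symm ih₁.2 ih₂.2⟩
  | assoc P Q R => exact ⟨simulates_assoc P Q R, simulates_assoc_symm P Q R⟩

theorem simulates {P Q : Sys} (h : SysEquiv P Q) : Simulates P Q :=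
  h.simulates_and_symm.1

theorem exists_reach {P P' Q : Sys} (hR : Reach P P') (h : SysEquiv P Q) :
    ∃ Q', Reach Q Q' ∧ SysEquiv P' Q' := by
  induction hR generalizing Q with
  | refl P => exact ⟨Q, .refl Q, h⟩
  | step hs _ ih =>
    rcases hs with hs | ⟨a, r, s, hs⟩
    · obtain ⟨Q₁, hQ, e⟩ := h.simulates _ _ hs
      obtain ⟨Q', hR, e'⟩ := ih e
      exact ⟨Q', .step (.inl hQ) hR, e'⟩
    · obtain ⟨Q₁, hQ, e⟩ := h.simulates _ _ hs
      obtain ⟨Q', hR, e'⟩ := ih e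
      exact ⟨Q', .step (.inr ⟨a, r, s, hQ⟩) hR, e'⟩

theorem canTick {P Q : Sys} (h : SysEquiv P Q) (hP : CanTick P) : CanTick Q := by
  obtain ⟨P', hs⟩ := hP
  obtain ⟨Q', hs', -⟩ := h.simulates _ _ hs
  exact ⟨Q', hs'⟩

theorem correct {P Q : Sys} (h : SysEquiv P Q) (hP : Correct P) : Correct Q := by
  intro Q' hQ
  obtain ⟨P', hP', e⟩ := exists_reach hQ h.symm
  obtain ⟨P'', hP'', hTick⟩ := hP P' hP'
  obtain ⟨Q'', hQ'', e'⟩ := exists_reach hP'' e.symm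
  exact ⟨Q'', hQ'', e'.canTick hTick⟩

end SysEquiv

theorem composeC_cons (x : Orc × Role) {L : List (Orc × Role)} (hL : L ≠ []) :
    composeC (x :: L) = .par (.atom x.1 x.2) (composeC L) := by
  obtain ⟨y, L, rfl⟩ := List.exists_cons_of_ne_nil hL
  rfl

theorem sysEquiv_composeC_append {A B : List (Orc × Role)} (hA : A ≠ []) (hB : B ≠ []) :
    SysEquiv (composeC (A ++ B)) (.par (composeC A) (composeC B)) := by
  induction A with
  | nil => exact absurd rfl hA
  | cons x A ih =>
    rcases eq_or_ne A [] with rfl | hA'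
    · rw [List.singleton_append, composeC_cons x hB]
      exact .refl _
    · rw [List.cons_append, composeC_cons x (by simp [hA']), composeC_cons x hA']
      exact ((SysEquiv.refl _).par (ih hA')).trans (.symm (.assoc ..))

def Sys.components : Sys → List (Orc × Role)
  | .atom C r => [(C, r)]
  | .par P Q => P.components ++ Q.components

namespace Sys

theorem components_ne_nil : ∀ P : Sys, P.components ≠ []
  | .atom _ _ => List.cons_ne_nil _ _
  | .par P _ => List.append_ne_nil_of_left_ne_nil P.components_ne_nil _

theorem map_snd_components : ∀ P : Sys, P.components.map Prod.snd = rolesList P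
  | .atom _ _ => rfl
  | .par P Q => by
    rw [components, List.map_append, map_snd_components P, map_snd_components Q]; rfl

theorem outputPersistent_of_mem_components :
    ∀ {P : Sys}, AllOP P → ∀ x ∈ P.components, OutputPersistent x.1
  | .atom _ _, h, _, hx => by rw [List.mem_singleton.mp hx]; exact h
  | .par _ _, h, x, hx => (List.mem_append.mp hx).elim
      (outputPersistent_of_mem_components h.1 x) (outputPersistent_of_mem_components h.2 x)

theorem not_mem_oroles_of_mem_components :
    ∀ {P : Sys}, NoSelfOut P → ∀ x ∈ P.components, x.2 ∉ oroles x.1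
  | .atom _ _, h, _, hx => by rw [List.mem_singleton.mp hx]; exact h
  | .par _ _, h, x, hx => (List.mem_append.mp hx).elim
      (not_mem_oroles_of_mem_components h.1 x) (not_mem_oroles_of_mem_components h.2 x)

theorem sysEquiv_composeC_components : ∀ P : Sys, SysEquiv P (composeC P.components)
  | .atom _ _ => .refl _
  | .par P Q => ((sysEquiv_composeC_components P).par (sysEquiv_composeC_components Q)).trans
      (sysEquiv_composeC_append P.components_ne_nil Q.components_ne_nil).symm

theorem sysEquiv_par_composeC_cons (C : Orc) (l : Role) (P : Sys) :
    SysEquiv (.par (.atom C l) P) (composeC ((C, l) :: P.components)) := by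
  rw [composeC_cons _ P.components_ne_nil]
  exact (SysEquiv.refl _).par P.sysEquiv_composeC_components

end Sys

theorem IndepSubcontractPre.correct_composeC_cons {le : Orc → Orc → Prop}
    (hle : IndepSubcontractPre le) {C' C : Orc} (hC' : OutputPersistent C')
    (hC : OutputPersistent C) (hlt : le C' C) {l : Role} (hl : l ∉ oroles C ∪ oroles C')
    {M : List (Orc × Role)} (hOP : ∀ x ∈ M, OutputPersistent x.1)
    (hself : ∀ x ∈ M, x.2 ∉ oroles x.1) (hroles : (l :: M.map Prod.snd).Nodup)
    (h : Correct (composeC ((C, l) :: M))) : Correct (composeC ((C', l) :: M)) := by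
  obtain ⟨hrefl, -, hrefine⟩ := hle
  have key := hrefine ((C, C', l) :: M.map fun x => (x.1, x.1, x.2)) (List.cons_ne_nil _ _)
    (by
      simp only [List.mem_cons, List.mem_map]
      rintro _ (rfl | ⟨x, hx, rfl⟩)
      · exact ⟨hC, hC', hlt⟩
      · exact ⟨hOP x hx, hOP x hx, hrefl _ (hOP x hx)⟩)
    (by simpa [Function.comp_def] using hroles)
    (by
      simp only [List.mem_cons, List.mem_map]
      rintro _ (rfl | ⟨x, hx, rfl⟩)
      · exact hl
      · simpa using hself x hx)
  simpa [Function.comp_def] using key (by simpa [Function.comp_def] using h)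

/-- The subcontract relation `⪯` is the maximal independent
subcontract pre-order over output persistent contracts: every independent
subcontract pre-order `≤` is included in `⪯`. -/
theorem subcontract_maximal (le : Orc → Orc → Prop)
    (hle : IndepSubcontractPre le) :
    ∀ C' C : Orc, OutputPersistent C' → OutputPersistent C →
      le C' C → Subcontract C' C := by
  intro C' C hC' hC hlt l hl P hOP hWF hlP hCorr
  have hroles : (l :: P.components.map Prod.snd).Nodup := by
    rw [Sys.map_snd_components]
    exact List.nodup_cons.mpr ⟨hlP, hWF.1⟩
  have hrefined := hle.correct_composeC_cons hC' hC hlt hl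
    (Sys.outputPersistent_of_mem_components hOP) (Sys.not_mem_oroles_of_mem_components hWF.2)
    hroles ((Sys.sysEquiv_par_composeC_cons C l P).correct hCorr)
  exact (Sys.sysEquiv_par_composeC_cons C' l P).symm.correct hrefined
end

section
/- For all output persistent contracts C and C': if NF(C' \\ (I(C') − I(C))) ⪯_test NF(C), where ⪯_test is the should-testing (fair testing) preorder of Rensink–Vogler and NF gives the normal form of a contract as a system of recursive equations over its LTS, then C' ⪯ C. -/
/-!
An environment `P` of a contract located at `l` is itself a test: it synchronises with the
contract exactly as in `[C]_l || P` and succeeds once the whole composition can perform `√`.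
Should-passing this test is correctness of `[C]_l || P`, so the hypothesis makes
`[C' \ M]_l || P` correct, with `M = I(C') − I(C)`.

Restricting `C'` to `C' \ M` does not lose any correct behaviour. Whenever `C'` inputs some
`a ∈ M`, the environment has an output `ā` towards `l` enabled. In the restricted system nobody
can ever consume it, and output persistence keeps it enabled, so that system could never
perform `√`, against its correctness. Hence every run of `[C']_l || P` is mirrored by a run of
`[C' \ M]_l || P`, and the successful continuations of the latter lift back.
-/

open Relation

section Restriction

variable {M : Finset AName}

theorem exists_ostep_of_ostep_restrict {D : Orc} {μ : OLabel} {E : Orc}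
    (h : OStep (restrict D M) μ E) :
    ∃ D', OStep D μ D' ∧ E = restrict D' M ∧ ∀ a ∈ M, μ ≠ .inp a := by
  induction D generalizing μ E with
  | inp a =>
    by_cases ha : a ∈ M
    · simp only [restrict, ha, ↓reduceIte] at h; cases h
    · simp only [restrict, ha, ↓reduceIte] at h; cases h
      exact ⟨.one, .inp, rfl, by rintro b hb ⟨⟩; exact ha hb⟩
  | seq A B ihA ihB =>
    cases h with
    | seqL h hμ =>
      obtain ⟨A', hA, rfl, hM⟩ := ihA h
      exact ⟨.seq A' B, .seqL hA hμ, rfl, hM⟩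
    | seqTick hA hB =>
      obtain ⟨A', hA', -⟩ := ihA hA
      obtain ⟨B', hB', rfl, hM⟩ := ihB hB
      exact ⟨B', .seqTick hA' hB', rfl, hM⟩
  | choice A B ihA ihB =>
    cases h with
    | choiceL h => obtain ⟨A', hA, rfl, hM⟩ := ihA h; exact ⟨A', .choiceL hA, rfl, hM⟩
    | choiceR h => obtain ⟨B', hB, rfl, hM⟩ := ihB h; exact ⟨B', .choiceR hB, rfl, hM⟩
  | par A B ihA ihB =>
    cases h with
    | parL h hμ =>
      obtain ⟨A', hA, rfl, hM⟩ := ihA h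
      exact ⟨.par A' B, .parL hA hμ, rfl, hM⟩
    | parR h hμ =>
      obtain ⟨B', hB, rfl, hM⟩ := ihB h
      exact ⟨.par A B', .parR hB hμ, rfl, hM⟩
    | parTick hA hB =>
      obtain ⟨A', hA', rfl, -⟩ := ihA hA
      obtain ⟨B', hB', rfl, -⟩ := ihB hB
      exact ⟨.par A' B', .parTick hA' hB', rfl, by rintro a - ⟨⟩⟩
  | star A ih =>
    cases h with
    | starTick => exact ⟨.zero, .starTick, rfl, by rintro a - ⟨⟩⟩
    | starStep h hμ =>
      obtain ⟨A', hA, rfl, hM⟩ := ih h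
      exact ⟨.seq A' (.star A), .starStep hA hμ, rfl, hM⟩
  | _ => cases h <;> exact ⟨_, by constructor, rfl, by rintro a - ⟨⟩⟩

theorem ostep_restrict {D : Orc} {μ : OLabel} {D' : Orc} (h : OStep D μ D')
    (hμ : ∀ a ∈ M, μ ≠ .inp a) : OStep (restrict D M) μ (restrict D' M) := by
  induction h with
  | @inp a =>
    have ha : a ∉ M := fun ha => hμ a ha rfl
    simpa only [restrict, ha, ↓reduceIte] using OStep.inp
  | seqTick _ _ ih₁ ih₂ => exact .seqTick (ih₁ (by rintro a - ⟨⟩)) (ih₂ hμ)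
  | parTick _ _ ih₁ ih₂ => exact .parTick (ih₁ (by rintro a - ⟨⟩)) (ih₂ (by rintro a - ⟨⟩))
  | choiceR _ ih => exact .choiceR (ih hμ)
  | _ => constructor <;> simp_all

end Restriction

theorem OutputPersistent.ostep {C C' : Orc} {μ : OLabel} (hC : OutputPersistent C)
    (h : OStep C μ C') : OutputPersistent C' :=
  fun D hD => hC D (.step h hD)

theorem SStep.allOP {Q Q' : Sys} {μ : SLabel} (h : SStep Q μ Q') (hQ : AllOP Q) : AllOP Q' := by
  induction h with
  | atomTau h | atomInp h | atomOut h | atomTick h => exact OutputPersistent.ostep hQ h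
  | parL _ _ ih => exact ⟨ih hQ.1, hQ.2⟩
  | parR _ _ ih => exact ⟨hQ.1, ih hQ.2⟩
  | commLR _ _ ih₁ ih₂ | commRL _ _ ih₁ ih₂ | parTick _ _ ih₁ ih₂ => exact ⟨ih₁ hQ.1, ih₂ hQ.2⟩

theorem SStep.rolesList_eq {Q Q' : Sys} {μ : SLabel} (h : SStep Q μ Q') :
    rolesList Q' = rolesList Q := by
  induction h <;> simp_all only [rolesList]

theorem SStep.mem_rolesList_of_inp {Q Q' : Sys} {a : AName} {s : Role}
    (h : SStep Q (.inp a s) Q') : s ∈ rolesList Q := by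
  generalize hμ : SLabel.inp a s = μ at h
  induction h <;> cases hμ <;> simp_all [rolesList]

def HasPendingOut (a : AName) (l : Role) : Sys → Prop
  | .atom E _ => ∃ E', OStep E (.out a l) E'
  | .par P Q => HasPendingOut a l P ∨ HasPendingOut a l Q

section PendingOut

variable {a : AName} {l : Role}

theorem HasPendingOut.not_canTick {Q : Sys} (hp : HasPendingOut a l Q) (hQ : AllOP Q) :
    ¬ CanTick Q := by
  rintro ⟨Q', h⟩
  generalize hμ : SLabel.tick = μ at h
  induction h with
  | atomTick h => exact (hQ _ (.refl _) a l hp).1 ⟨_, h⟩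
  | parTick _ _ ih₁ ih₂ => exact hp.elim (ih₁ · hQ.1 hμ) (ih₂ · hQ.2 hμ)
  | _ => cases hμ <;> simp_all

/-- Without a component located at `l`, nothing in `Q` can consume an output directed to `l`,
and output persistence keeps it enabled. -/
theorem HasPendingOut.sstep {Q Q' : Sys} {μ : SLabel} (hp : HasPendingOut a l Q)
    (hQ : AllOP Q) (hl : l ∉ rolesList Q) (h : SStep Q μ Q') (hμ : μ ≠ .tick)
    (hμa : ∀ r, μ ≠ .out a r l) : HasPendingOut a l Q' := by
  induction h with
  | @atomOut C _ _ _ r h =>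
    refine (hQ C (.refl _) a l hp).2 _ _ h ?_
    rintro ⟨⟩
    exact hμa r rfl
  | atomTau h | atomInp h => exact (hQ _ (.refl _) a l hp).2 _ _ h (by simp)
  | atomTick => exact absurd rfl hμ
  | parL _ _ ih =>
    simp only [rolesList, List.mem_append, not_or] at hl
    exact hp.imp_left (ih · hQ.1 hl.1 hμ hμa)
  | parR _ _ ih =>
    simp only [rolesList, List.mem_append, not_or] at hl
    exact hp.imp_right (ih · hQ.2 hl.2 hμ hμa)
  | @commLR _ b _ s _ _ _ _ h₂ ih₁ ih₂ =>
    simp only [rolesList, List.mem_append, not_or] at hl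
    have hbs : ¬ (b = a ∧ s = l) := by
      rintro ⟨rfl, rfl⟩
      exact hl.2 h₂.mem_rolesList_of_inp
    exact hp.imp (ih₁ · hQ.1 hl.1 (by simp) (by rintro r' ⟨⟩; exact hbs ⟨rfl, rfl⟩))
      (ih₂ · hQ.2 hl.2 (by simp) (by simp))
  | @commRL _ b s _ _ _ _ h₁ _ ih₁ ih₂ =>
    simp only [rolesList, List.mem_append, not_or] at hl
    have hbs : ¬ (b = a ∧ s = l) := by
      rintro ⟨rfl, rfl⟩
      exact hl.1 h₁.mem_rolesList_of_inp
    exact hp.imp (ih₁ · hQ.1 hl.1 (by simp) (by simp))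
      (ih₂ · hQ.2 hl.2 (by simp) (by rintro r' ⟨⟩; exact hbs ⟨rfl, rfl⟩))
  | parTick => exact absurd rfl hμ

end PendingOut

theorem reach_iff_reflTransGen {P R : Sys} : Reach P R ↔ ReflTransGen CompleteStep P R := by
  constructor
  · intro h
    induction h with
    | refl => rfl
    | step hs _ ih => exact .head hs ih
  · intro h
    induction h using ReflTransGen.head_induction_on with
    | refl => exact .refl _
    | head hs _ ih => exact .step hs ih

theorem tcReach_iff_reflTransGen {T : TestLTS} {c c' : Orc × T.S} :
    TCReach T c c' ↔ ReflTransGen (TCStep T) c c' := by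
  constructor
  · intro h
    induction h with
    | refl => rfl
    | step hs _ ih => exact .head hs ih
  · intro h
    induction h using ReflTransGen.head_induction_on with
    | refl => exact .refl _
    | head hs _ ih => exact .step hs ih

section Located

variable {l : Role}

def locate (l : Role) (c : Orc × Sys) : Sys := .par (.atom c.1 l) c.2

inductive LocStep (l : Role) : Orc × Sys → Orc × Sys → Prop
  | tau {D D' Q} : OStep D .tau D' → LocStep l (D, Q) (D', Q)
  | env {D Q Q'} : CompleteStep Q Q' → LocStep l (D, Q) (D, Q')
  | out {D D' Q Q' a s} : OStep D (.out a s) D' → SStep Q (.inp a s) Q' →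
      LocStep l (D, Q) (D', Q')
  | inp {D D' Q Q' a r} : OStep D (.inp a) D' → SStep Q (.out a r l) Q' →
      LocStep l (D, Q) (D', Q')

theorem completeStep_locate_iff {c : Orc × Sys} {R : Sys} :
    CompleteStep (locate l c) R ↔ ∃ c', R = locate l c' ∧ LocStep l c c' := by
  obtain ⟨D, Q⟩ := c
  constructor
  · rintro (h | ⟨a, r, s, h⟩)
    · cases h with
      | parL h _ => cases h with | atomTau h => exact ⟨_, rfl, .tau h⟩
      | parR h _ => exact ⟨(D, _), rfl, .env (.inl h)⟩
    · cases h with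
      | parL h _ => cases h
      | parR h _ => exact ⟨(D, _), rfl, .env (.inr ⟨a, r, s, h⟩)⟩
      | commLR h₁ h₂ => cases h₁ with | atomOut h₁ => exact ⟨_, rfl, .out h₁ h₂⟩
      | commRL h₁ h₂ => cases h₁ with | atomInp h₁ => exact ⟨_, rfl, .inp h₁ h₂⟩
  · rintro ⟨c', rfl, h⟩
    cases h with
    | tau h => exact .inl (.parL (.atomTau h) (by simp))
    | env h =>
      rcases h with h | ⟨a, r, s, h⟩
      · exact .inl (.parR h (by simp))
      · exact .inr ⟨a, r, s, .parR h (by simp)⟩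
    | out h₁ h₂ => exact .inr ⟨_, _, _, .commLR (.atomOut h₁) h₂⟩
    | inp h₁ h₂ => exact .inr ⟨_, _, _, .commRL (.atomInp h₁) h₂⟩

theorem reach_locate_iff {c : Orc × Sys} {R : Sys} :
    Reach (locate l c) R ↔ ∃ c', R = locate l c' ∧ ReflTransGen (LocStep l) c c' := by
  rw [reach_iff_reflTransGen]
  constructor
  · intro h
    generalize hS : locate l c = S at h
    induction h using ReflTransGen.head_induction_on generalizing c with
    | refl => exact ⟨c, hS.symm, .refl⟩
    | head hs _ ih =>
      subst hS
      obtain ⟨c₁, rfl, h₁⟩ := completeStep_locate_iff.1 hs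
      obtain ⟨c', rfl, h'⟩ := ih rfl
      exact ⟨c', rfl, .head h₁ h'⟩
  · rintro ⟨c', rfl, h⟩
    exact h.lift (locate l) fun _ _ hs => completeStep_locate_iff.2 ⟨_, rfl, hs⟩

theorem canTick_locate_iff {c : Orc × Sys} :
    CanTick (locate l c) ↔ (∃ D', OStep c.1 .tick D') ∧ CanTick c.2 := by
  constructor
  · rintro ⟨_, h⟩
    cases h with
    | parL _ h | parR _ h => exact absurd rfl h
    | parTick h₁ h₂ => cases h₁ with | atomTick h₁ => exact ⟨⟨_, h₁⟩, ⟨_, h₂⟩⟩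
  · rintro ⟨⟨_, h₁⟩, ⟨_, h₂⟩⟩
    exact ⟨_, .parTick (.atomTick h₁) h₂⟩

theorem LocStep.allOP {c c' : Orc × Sys} (h : LocStep l c c') (hc : AllOP c.2) : AllOP c'.2 := by
  cases h with
  | tau => exact hc
  | env h => rcases h with h | ⟨_, _, _, h⟩ <;> exact h.allOP hc
  | out _ h | inp _ h => exact h.allOP hc

theorem LocStep.rolesList_eq {c c' : Orc × Sys} (h : LocStep l c c') :
    rolesList c'.2 = rolesList c.2 := by
  cases h with
  | tau => rfl
  | env h => rcases h with h | ⟨_, _, _, h⟩ <;> exact h.rolesList_eq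
  | out _ h | inp _ h => exact h.rolesList_eq

end Located

section EnvTest

variable {l : Role} {P : Sys}

/-- The test played by an environment for a contract located at `l`: in state `some Q` the
environment is `Q`; the global `√` leads to `none`, the only state where the test succeeds. -/
inductive TStep (l : Role) : Option Sys → TLab → Option Sys → Prop
  | tau {Q Q'} : CompleteStep Q Q' → TStep l (some Q) .tau (some Q')
  | syncOut {Q Q' a s} : SStep Q (.inp a s) Q' → TStep l (some Q) (.sync (.out a s)) (some Q')
  | syncInp {Q Q' a r} : SStep Q (.out a r l) Q' → TStep l (some Q) (.sync (.inp a)) (some Q')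
  | syncTick {Q Q'} : SStep Q .tick Q' → TStep l (some Q) (.sync .tick) none
  | succ : TStep l none .succ none

abbrev envTest (l : Role) (P : Sys) : TestLTS := ⟨Option Sys, TStep l, some P⟩

theorem LocStep.tcStep {c c' : Orc × Sys} (h : LocStep l c c') :
    TCStep (envTest l P) (c.1, some c.2) (c'.1, some c'.2) := by
  cases h with
  | tau h => exact .ctau h
  | env h => exact .ttau (.tau h)
  | out h₁ h₂ => exact .sync h₁ (by simp) (.syncOut h₂)
  | inp h₁ h₂ => exact .sync h₁ (by simp) (.syncInp h₂)

theorem exists_tcStep_none_of_canTick {c : Orc × Sys} (h : CanTick (locate l c)) :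
    ∃ D', TCStep (envTest l P) (c.1, some c.2) (D', none) := by
  obtain ⟨⟨D', h₁⟩, ⟨Q', h₂⟩⟩ := canTick_locate_iff.1 h
  exact ⟨D', .sync h₁ (by simp) (.syncTick h₂)⟩

theorem tcStep_envTest_some {c : Orc × Sys} {e : Orc × Option Sys}
    (h : TCStep (envTest l P) (c.1, some c.2) e) :
    (∃ c', e = (c'.1, some c'.2) ∧ LocStep l c c') ∨ (e.2 = none ∧ CanTick (locate l c)) := by
  obtain ⟨D, Q⟩ := c
  cases h with
  | ctau h => exact .inl ⟨(_, Q), rfl, .tau h⟩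
  | ttau h => cases h with | tau h => exact .inl ⟨(D, _), rfl, .env h⟩
  | sync h₁ _ h₂ =>
    cases h₂ with
    | syncOut h₂ => exact .inl ⟨(_, _), rfl, .out h₁ h₂⟩
    | syncInp h₂ => exact .inl ⟨(_, _), rfl, .inp h₁ h₂⟩
    | syncTick h₂ => exact .inr ⟨rfl, canTick_locate_iff.2 ⟨⟨_, h₁⟩, ⟨_, h₂⟩⟩⟩

theorem tcStep_envTest_none {D : Orc} {e : Orc × Option Sys}
    (h : TCStep (envTest l P) (D, none) e) : e.2 = none := by
  cases h with
  | ctau => rfl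
  | ttau h | sync _ _ h => cases h

theorem tcReach_envTest_none {D : Orc} {e : Orc × Option Sys}
    (h : ReflTransGen (TCStep (envTest l P)) (D, none) e) : e.2 = none := by
  induction h with
  | refl => rfl
  | @tail b _ _ hs ih =>
    obtain ⟨D', t⟩ := b
    cases ih
    exact tcStep_envTest_none hs

theorem reflTransGen_tcStep_of_locStep {c c' : Orc × Sys} (h : ReflTransGen (LocStep l) c c') :
    ReflTransGen (TCStep (envTest l P)) (c.1, some c.2) (c'.1, some c'.2) :=
  h.lift (fun c => (c.1, some c.2)) fun _ _ => LocStep.tcStep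

theorem tcReach_envTest_some {c : Orc × Sys} {e : Orc × Option Sys}
    (h : ReflTransGen (TCStep (envTest l P)) (c.1, some c.2) e) :
    e.2 = none ∨ ∃ c', e = (c'.1, some c'.2) ∧ ReflTransGen (LocStep l) c c' := by
  generalize hx : (c.1, some c.2) = x at h
  induction h using ReflTransGen.head_induction_on generalizing c with
  | refl => exact .inr ⟨c, hx.symm, .refl⟩
  | @head x₁ x₂ hs hr ih =>
    subst hx
    rcases tcStep_envTest_some hs with ⟨c₁, rfl, h₁⟩ | ⟨hn, -⟩
    · exact (ih rfl).imp_right fun ⟨c', he, h'⟩ => ⟨c', he, .head h₁ h'⟩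
    · obtain ⟨D, t⟩ := x₂
      cases hn
      exact .inl (tcReach_envTest_none hr)

theorem exists_canTick_of_tcReach_envTest {c : Orc × Sys} {e : Orc × Option Sys}
    (h : ReflTransGen (TCStep (envTest l P)) (c.1, some c.2) e) (he : e.2 = none) :
    ∃ c', ReflTransGen (LocStep l) c c' ∧ CanTick (locate l c') := by
  generalize hx : (c.1, some c.2) = x at h
  induction h using ReflTransGen.head_induction_on generalizing c with
  | refl => subst hx; cases he
  | head hs _ ih =>
    subst hx
    rcases tcStep_envTest_some hs with ⟨c₁, rfl, h₁⟩ | ⟨-, htick⟩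
    · obtain ⟨c', h', htick⟩ := ih rfl
      exact ⟨c', .head h₁ h', htick⟩
    · exact ⟨c, .refl, htick⟩

theorem shd_envTest_iff_correct {C : Orc} : Shd C (envTest l P) ↔ Correct (locate l (C, P)) := by
  constructor
  · intro hshd R hR
    obtain ⟨c, rfl, hc⟩ := reach_locate_iff.1 hR
    obtain ⟨⟨D, t⟩, he, t', hsucc⟩ :=
      hshd (c.1, some c.2) (tcReach_iff_reflTransGen.2 (reflTransGen_tcStep_of_locStep hc))
    cases hsucc
    obtain ⟨c', hc', htick⟩ :=
      exists_canTick_of_tcReach_envTest (tcReach_iff_reflTransGen.1 he) rfl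
    exact ⟨locate l c', reach_locate_iff.2 ⟨c', rfl, hc'⟩, htick⟩
  · intro hcorr e he
    rcases tcReach_envTest_some (c := (C, P)) (tcReach_iff_reflTransGen.1 he) with hn | ⟨c, rfl, hc⟩
    · exact ⟨e, .refl _, none, by rw [hn]; exact .succ⟩
    · obtain ⟨R, hR, htick⟩ := hcorr (locate l c) (reach_locate_iff.2 ⟨c, rfl, hc⟩)
      obtain ⟨c', rfl, hcc'⟩ := reach_locate_iff.1 hR
      obtain ⟨D', hs⟩ := exists_tcStep_none_of_canTick (P := P) htick
      exact ⟨(D', none),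
        tcReach_iff_reflTransGen.2 ((reflTransGen_tcStep_of_locStep hcc').tail hs), none, .succ⟩

end EnvTest

theorem SStep.hasPendingOut {Q Q' : Sys} {a : AName} {r l : Role} (h : SStep Q (.out a r l) Q') :
    HasPendingOut a l Q := by
  generalize hμ : SLabel.out a r l = μ at h
  induction h with
  | atomOut h => cases hμ; exact ⟨_, h⟩
  | parL _ _ ih => exact .inl (ih hμ)
  | parR _ _ ih => exact .inr (ih hμ)
  | _ => cases hμ

theorem Correct.completeStep {S S' : Sys} (h : Correct S) (hs : CompleteStep S S') : Correct S' :=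
  fun R hR => h R (.step hs hR)

section RestrictedContract

variable {M : Finset AName} {l : Role}

theorem canTick_of_canTick_restrict {D : Orc} {Q : Sys}
    (h : CanTick (locate l (restrict D M, Q))) : CanTick (locate l (D, Q)) := by
  obtain ⟨⟨E, hE⟩, hQ⟩ := canTick_locate_iff.1 h
  obtain ⟨D', hD', -⟩ := exists_ostep_of_ostep_restrict hE
  exact canTick_locate_iff.2 ⟨⟨D', hD'⟩, hQ⟩

theorem LocStep.of_restrict {D : Orc} {Q : Sys} {c' : Orc × Sys}
    (h : LocStep l (restrict D M, Q) c') : ∃ D', c'.1 = restrict D' M ∧ LocStep l (D, Q) (D', c'.2) := by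
  cases h with
  | tau h =>
    obtain ⟨D', hD, rfl, -⟩ := exists_ostep_of_ostep_restrict h
    exact ⟨D', rfl, .tau hD⟩
  | env h => exact ⟨D, rfl, .env h⟩
  | out h₁ h₂ =>
    obtain ⟨D', hD, rfl, -⟩ := exists_ostep_of_ostep_restrict h₁
    exact ⟨D', rfl, .out hD h₂⟩
  | inp h₁ h₂ =>
    obtain ⟨D', hD, rfl, -⟩ := exists_ostep_of_ostep_restrict h₁
    exact ⟨D', rfl, .inp hD h₂⟩

theorem LocStep.restrict_or_hasPendingOut {D D' : Orc} {Q Q' : Sys}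
    (h : LocStep l (D, Q) (D', Q')) :
    LocStep l (restrict D M, Q) (restrict D' M, Q') ∨ ∃ a ∈ M, HasPendingOut a l Q := by
  cases h with
  | tau h => exact .inl (.tau (ostep_restrict h (by rintro a - ⟨⟩)))
  | env h => exact .inl (.env h)
  | out h₁ h₂ => exact .inl (.out (ostep_restrict h₁ (by rintro a - ⟨⟩)) h₂)
  | @inp _ _ _ _ a _ h₁ h₂ =>
    by_cases ha : a ∈ M
    · exact .inr ⟨a, ha, h₂.hasPendingOut⟩
    · exact .inl (.inp (ostep_restrict h₁ (by rintro b hb ⟨⟩; exact ha hb)) h₂)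

theorem LocStep.hasPendingOut_of_restrict {D : Orc} {Q : Sys} {c' : Orc × Sys} {a : AName}
    (h : LocStep l (restrict D M, Q) c') (hp : HasPendingOut a l Q) (ha : a ∈ M)
    (hQ : AllOP Q) (hl : l ∉ rolesList Q) : HasPendingOut a l c'.2 := by
  cases h with
  | tau => exact hp
  | env h => rcases h with h | ⟨_, _, _, h⟩ <;> exact hp.sstep hQ hl h (by simp) (by simp)
  | out _ h => exact hp.sstep hQ hl h (by simp) (by simp)
  | inp h₁ h₂ =>
    obtain ⟨-, -, -, hM⟩ := exists_ostep_of_ostep_restrict h₁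
    exact hp.sstep hQ hl h₂ (by simp) (by rintro r ⟨⟩; exact hM a ha rfl)

theorem reflTransGen_of_restrict {D : Orc} {Q : Sys} {c : Orc × Sys}
    (h : ReflTransGen (LocStep l) (restrict D M, Q) c) :
    ∃ D', c.1 = restrict D' M ∧ ReflTransGen (LocStep l) (D, Q) (D', c.2) := by
  generalize hx : (restrict D M, Q) = x at h
  induction h using ReflTransGen.head_induction_on generalizing D Q with
  | refl => subst hx; exact ⟨D, rfl, .refl⟩
  | @head x₁ x₂ hs _ ih =>
    subst hx
    obtain ⟨D₁, hD₁, hs'⟩ := hs.of_restrict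
    obtain ⟨E, Q₁⟩ := x₂
    cases hD₁
    obtain ⟨D', hD', h'⟩ := ih rfl
    exact ⟨D', hD', .head hs' h'⟩

/-- The restricted contract never inputs `a`, so the output stays pending and blocks `√`. -/
theorem not_canTick_of_hasPendingOut {D : Orc} {Q : Sys} {c : Orc × Sys} {a : AName}
    (h : ReflTransGen (LocStep l) (restrict D M, Q) c) (hp : HasPendingOut a l Q) (ha : a ∈ M)
    (hQ : AllOP Q) (hl : l ∉ rolesList Q) : ¬ CanTick (locate l c) := by
  generalize hx : (restrict D M, Q) = x at h
  induction h using ReflTransGen.head_induction_on generalizing D Q with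
  | refl => subst hx; exact fun ht => hp.not_canTick hQ (canTick_locate_iff.1 ht).2
  | @head x₁ x₂ hs _ ih =>
    subst hx
    obtain ⟨D₁, hD₁, -⟩ := hs.of_restrict
    obtain ⟨E, Q₁⟩ := x₂
    cases hD₁
    exact ih (hs.hasPendingOut_of_restrict hp ha hQ hl) (hs.allOP hQ) (hs.rolesList_eq ▸ hl) rfl

theorem reflTransGen_restrict_of_correct {D : Orc} {Q : Sys} {c : Orc × Sys}
    (h : ReflTransGen (LocStep l) (D, Q) c) (hcorr : Correct (locate l (restrict D M, Q)))
    (hQ : AllOP Q) (hl : l ∉ rolesList Q) :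
    ReflTransGen (LocStep l) (restrict D M, Q) (restrict c.1 M, c.2) := by
  generalize hx : (D, Q) = x at h
  induction h using ReflTransGen.head_induction_on generalizing D Q with
  | refl => subst hx; exact .refl
  | @head x₁ x₂ hs _ ih =>
    subst hx
    obtain ⟨D₁, Q₁⟩ := x₂
    rcases hs.restrict_or_hasPendingOut (M := M) with hs' | ⟨a, ha, hp⟩
    · have hcorr₁ := hcorr.completeStep (completeStep_locate_iff.2 ⟨_, rfl, hs'⟩)
      exact .head hs' (ih hcorr₁ (hs.allOP hQ) (hs.rolesList_eq ▸ hl) rfl)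
    · obtain ⟨R, hR, htick⟩ := hcorr _ (.refl _)
      obtain ⟨c', rfl, hc'⟩ := reach_locate_iff.1 hR
      exact absurd htick (not_canTick_of_hasPendingOut hc' hp ha hQ hl)

theorem correct_of_correct_restrict {D : Orc} {Q : Sys}
    (hcorr : Correct (locate l (restrict D M, Q))) (hQ : AllOP Q) (hl : l ∉ rolesList Q) :
    Correct (locate l (D, Q)) := by
  intro R hR
  obtain ⟨c, rfl, hc⟩ := reach_locate_iff.1 hR
  obtain ⟨R', hR', htick⟩ :=
    hcorr _ (reach_locate_iff.2 ⟨_, rfl, reflTransGen_restrict_of_correct hc hcorr hQ hl⟩)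
  obtain ⟨⟨E, Q'⟩, rfl, hc'⟩ := reach_locate_iff.1 hR'
  obtain ⟨D', rfl, hc''⟩ := reflTransGen_of_restrict hc'
  exact ⟨locate l (D', Q'), reach_locate_iff.2 ⟨_, rfl, hc''⟩, canTick_of_canTick_restrict htick⟩

end RestrictedContract

theorem should_testing_sound_general (C C' : Orc)
    (h : ShouldPre (NF (restrict C' (inames C' \ inames C))) (NF C)) :
    Subcontract C' C := by
  intro l _ P hP _ hl hcorr
  have hpass : Shd (restrict C' (inames C' \ inames C)) (envTest l P) :=
    h _ (shd_envTest_iff_correct.2 hcorr)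
  exact correct_of_correct_restrict (shd_envTest_iff_correct.1 hpass) hP hl

/-- Soundness of the should-testing characterization: for all
output persistent contracts `C`, `C'`, if
`NF(C' \\ (I(C') − I(C))) ⪯_test NF(C)` then `C' ⪯ C`. -/
theorem should_testing_sound (C C' : Orc)
    (hC : OutputPersistent C) (hC' : OutputPersistent C')
    (h : ShouldPre (NF (restrict C' (inames C' \ inames C))) (NF C)) :
    Subcontract C' C :=
  should_testing_sound_general C C' h
end
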